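/- arXiv:1910.14023 — 2 statements merged into one kernel-verified Lean document; each statement's English description precedes it below -/
import Mathlib

section
/- Let T be an operator on the space of κ-bounded functions on a set S defined by (Tv)(s) = π(s) + β · max{0, (Γv)(s)}, where Γ is a positive linear operator satisfying Γκ ≤ κ/δ pointwise for some δ ∈ (β, 1), β ∈ (0,1), and π is κ-bounded. Then T is a contraction with modulus β/δ with respect to the κ-weighted supremum norm: ‖Tu − Tv‖_κ ≤ (β/δ)‖u − v‖_κ. -/
/-- The Bellman operator `(Tv)(s) = π s + β * max 0 (Γ v s)` is a contraction of
modulus `β/δ` in the `κ`-weighted supremum norm, stated pointwise: if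
`|u - v| ≤ C·κ` then `|Tu - Tv| ≤ (β/δ)·C·κ`. -/
theorem bellman_contraction
    {S : Type*} (κ : S → ℝ) (hκ : ∀ s, 1 ≤ κ s)
    (β δ : ℝ) (hβ : 0 < β) (hβδ : β < δ) (hδ : δ < 1)
    (Γ : (S → ℝ) → (S → ℝ))
    (hΓmono : ∀ f g : S → ℝ, (∀ s, f s ≤ g s) → ∀ s, Γ f s ≤ Γ g s)
    (hΓlin : ∀ f g : S → ℝ, Γ (f - g) = Γ f - Γ g)
    (hΓabs : ∀ (f : S → ℝ) (s : S), |Γ f s| ≤ Γ (fun t => |f t|) s)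
    (hΓκ : ∀ s, Γ κ s ≤ κ s / δ)
    (π : S → ℝ) (hπ : ∃ M : ℝ, ∀ s, |π s| ≤ M * κ s)
    (T : (S → ℝ) → (S → ℝ))
    (hT : ∀ v s, T v s = π s + β * max 0 (Γ v s)) :
    ∀ (u v : S → ℝ) (C : ℝ), 0 ≤ C → (∀ s, |u s - v s| ≤ C * κ s) →
      ∀ s, |T u s - T v s| ≤ (β / δ) * C * κ s := by
  have hδ0 : 0 < δ := lt_trans hβ hβδ
  have h0 : Γ 0 = 0 := by
    have := hΓlin 0 0
    simpa using this
  have hadd : ∀ f g : S → ℝ, Γ (f + g) = Γ f + Γ g := by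
    intro f g
    have hneg : Γ (-g) = - Γ g := by
      have := hΓlin 0 g
      simpa [h0] using this
    have := hΓlin f (-g)
    simpa [sub_neg_eq_add, hneg] using this
  have hnat : ∀ (n : ℕ) (f : S → ℝ), Γ (n • f) = n • Γ f := by
    intro n f
    induction n with
    | zero => simpa using h0
    | succ n ih =>
      have h1 : (n + 1 : ℕ) • f = n • f + f := by simp [add_smul]
      rw [h1, hadd, ih, add_smul]
      simp
  have hrat : ∀ q : ℚ, 0 ≤ q → ∀ s, Γ (fun t => (q : ℝ) * κ t) s = (q : ℝ) * Γ κ s := by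
    intro q hq s
    have hden : (0 : ℝ) < (q.den : ℝ) := by exact_mod_cast q.pos
    have hq' : (q : ℝ) * (q.den : ℝ) = (q.num : ℝ) := by
      rw [mul_comm]; exact_mod_cast Rat.den_mul_eq_num q
    have h4 : (0:ℤ) ≤ q.num := Rat.num_nonneg.mpr hq
    have hnum : ((q.num.toNat : ℝ)) = (q.num : ℝ) := by exact_mod_cast Int.toNat_of_nonneg h4
    have key : (q.den : ℕ) • (fun t => (q : ℝ) * κ t) = (q.num.toNat : ℕ) • κ := by
      funext t
      simp only [Pi.smul_apply, nsmul_eq_mul]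
      rw [hnum, ← hq']
      ring
    have h5 := congrArg (fun F => F s) (hnat q.den (fun t => (q : ℝ) * κ t))
    rw [key, hnat] at h5
    simp only [Pi.smul_apply, nsmul_eq_mul] at h5
    rw [hnum] at h5
    -- h5 : (q.num : ℝ) * Γ κ s = (q.den : ℝ) * Γ (fun t => q * κ t) s  (some order)
    have : (q.den : ℝ) * Γ (fun t => (q : ℝ) * κ t) s = (q.den : ℝ) * ((q : ℝ) * Γ κ s) := by
      rw [← h5, ← hq']; ring
    exact mul_left_cancel₀ (ne_of_gt hden) this
  have hΓκ0 : ∀ s, 0 ≤ Γ κ s := by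
    intro s
    have := hΓmono 0 κ (fun t => le_trans zero_le_one (hκ t)) s
    simpa [h0] using this
  intro u v C hC hb s
  have hκpos : 0 < κ s := lt_of_lt_of_le one_pos (hκ s)
  have hkey : Γ (fun t => |u t - v t|) s ≤ C * (κ s / δ) := by
    have hstep : ∀ q : ℚ, C < (q : ℝ) → Γ (fun t => |u t - v t|) s ≤ (q : ℝ) * (κ s / δ) := by
      intro q hq
      have hq0 : (0:ℚ) ≤ q := by exact_mod_cast le_of_lt (lt_of_le_of_lt hC hq)
      have hq0' : (0:ℝ) ≤ (q:ℝ) := by exact_mod_cast hq0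
      have hmono := hΓmono (fun t => |u t - v t|) (fun t => (q : ℝ) * κ t)
        (fun t => by
          show |u t - v t| ≤ (q : ℝ) * κ t
          have hκt : 0 < κ t := lt_of_lt_of_le one_pos (hκ t)
          have := hb t
          nlinarith) s
      calc Γ (fun t => |u t - v t|) s ≤ (q : ℝ) * Γ κ s := by rw [← hrat q hq0 s]; exact hmono
        _ ≤ (q : ℝ) * (κ s / δ) := mul_le_mul_of_nonneg_left (hΓκ s) hq0'
    by_contra h
    push_neg at h
    have hpos : 0 < κ s / δ := div_pos hκpos hδ0
    obtain ⟨q, hq1, hq2⟩ := exists_rat_btwn (show C < Γ (fun t => |u t - v t|) s / (κ s / δ) by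
      rw [lt_div_iff₀ hpos]; linarith)
    have h6 := hstep q hq1
    rw [lt_div_iff₀ hpos] at hq2
    linarith
  have hmax : |max 0 (Γ u s) - max 0 (Γ v s)| ≤ |Γ u s - Γ v s| := by
    rw [max_comm 0 (Γ u s), max_comm 0 (Γ v s)]
    exact abs_max_sub_max_le_abs _ _ _
  have habs' : |Γ u s - Γ v s| ≤ C * (κ s / δ) := by
    have hdiff : Γ u s - Γ v s = Γ (u - v) s := by
      rw [hΓlin]; rfl
    rw [hdiff]
    calc |Γ (u - v) s| ≤ Γ (fun t => |(u - v) t|) s := hΓabs (u - v) s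
      _ = Γ (fun t => |u t - v t|) s := rfl
      _ ≤ C * (κ s / δ) := hkey
  have heq : T u s - T v s = β * (max 0 (Γ u s) - max 0 (Γ v s)) := by
    rw [hT, hT]; ring
  calc |T u s - T v s| = β * |max 0 (Γ u s) - max 0 (Γ v s)| := by
        rw [heq, abs_mul, abs_of_pos hβ]
    _ ≤ β * (C * (κ s / δ)) :=
        mul_le_mul_of_nonneg_left (le_trans hmax habs') (le_of_lt hβ)
    _ = (β / δ) * C * κ s := by ring
end

section
/- Let P be a Markov kernel on ℝ≥0 defined by P(φ, B) = Γ(φ, B)·1{φ ≥ c} + γ(B)·1{φ < c}, where c > 0, γ is a probability measure with γ([0, a]) > 0 for every a > 0, and Γ is a Markov kernel such that for every φ there exists n with Γⁿ(φ, [0, c)) > 0. Then for every φ ∈ ℝ≥0 and every Borel set B with γ(B) > 0, there exists m ∈ ℕ with Pᵐ(φ, B) > 0 (i.e., P is γ-irreducible). -/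
open MeasureTheory ProbabilityTheory

/-- γ-irreducibility of the entry-exit kernel: from any state, every Borel set with
positive `γ`-measure is reached in finitely many steps with positive probability. -/
theorem entry_exit_kernel_gamma_irreducible
    (c : NNReal) (hc : 0 < c)
    (γ : Measure NNReal) [IsProbabilityMeasure γ]
    (hγ : ∀ a : NNReal, 0 < a → 0 < γ (Set.Iic a))
    (Γ P : Kernel NNReal NNReal) [IsMarkovKernel Γ] [IsMarkovKernel P]
    (Γiter : ℕ → Kernel NNReal NNReal)
    (hΓ1 : Γiter 1 = Γ)
    (hΓsucc : ∀ n, Γiter (n + 1) = Γ ∘ₖ Γiter n)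
    (hΓreach : ∀ φ : NNReal, ∃ n : ℕ, 1 ≤ n ∧ 0 < Γiter n φ (Set.Iio c))
    (hP : ∀ φ B, MeasurableSet B →
      P φ B = (if φ < c then γ B else Γ φ B))
    (Piter : ℕ → Kernel NNReal NNReal)
    (hP1 : Piter 1 = P)
    (hPsucc : ∀ m, Piter (m + 1) = P ∘ₖ Piter m) :
    ∀ (φ : NNReal) (B : Set NNReal), MeasurableSet B → 0 < γ B →
      ∃ m : ℕ, 1 ≤ m ∧ 0 < Piter m φ B := by
  classical
  intro φ B hB hγB
  have hIio : MeasurableSet (Set.Iio c) := measurableSet_Iio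
  have key : ∃ m : ℕ, 1 ≤ m ∧ 0 < Piter m φ (Set.Iio c) := by
    by_cases hφ : φ < c
    · refine ⟨1, le_refl 1, ?_⟩
      rw [hP1, hP φ _ hIio, if_pos hφ]
      have h2 : (0 : NNReal) < c / 2 := by positivity
      calc (0 : ENNReal) < γ (Set.Iic (c / 2)) := hγ _ h2
        _ ≤ γ (Set.Iio c) := by
            apply measure_mono
            intro x hx
            exact lt_of_le_of_lt hx (NNReal.half_lt_self hc.ne')
    · have hex := hΓreach φ
      obtain ⟨hn1, hnpos⟩ := Nat.find_spec hex
      set n := Nat.find hex with hn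
      have hmin : ∀ k < n, ¬(1 ≤ k ∧ 0 < Γiter k φ (Set.Iio c)) :=
        fun k hk => Nat.find_min hex hk
      have heq : ∀ k, 1 ≤ k → k ≤ n → Piter k φ = Γiter k φ := by
        intro k hk1 hkn
        induction k with
        | zero => omega
        | succ k ih =>
          by_cases hk0 : k = 0
          · subst hk0
            ext s hs
            rw [hP1, hΓ1, hP φ s hs, if_neg hφ]
          · have hk1' : 1 ≤ k := Nat.one_le_iff_ne_zero.mpr hk0
            have hkn' : k ≤ n := by omega
            have hkltn : k < n := by omega
            have hPk := ih hk1' hkn'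
            have hzero : Γiter k φ (Set.Iio c) = 0 := by
              by_contra hne
              exact hmin k hkltn ⟨hk1', pos_iff_ne_zero.mpr hne⟩
            have hae : ∀ᵐ ψ ∂(Γiter k φ), ¬ ψ < c := by
              rw [ae_iff]
              simp only [not_not]
              exact hzero
            ext s hs
            rw [hPsucc, hΓsucc, Kernel.comp_apply' _ _ _ hs,
              Kernel.comp_apply' _ _ _ hs, hPk]
            apply lintegral_congr_ae
            filter_upwards [hae] with ψ hψ
            rw [hP ψ s hs, if_neg hψ]
      exact ⟨n, hn1, by rw [heq n hn1 le_rfl]; exact hnpos⟩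
  obtain ⟨m, hm1, hmpos⟩ := key
  refine ⟨m + 1, by omega, ?_⟩
  rw [hPsucc, Kernel.comp_apply' _ _ _ hB]
  have h1 : γ B * Piter m φ (Set.Iio c) ≤ ∫⁻ ψ, P ψ B ∂(Piter m φ) := by
    calc γ B * Piter m φ (Set.Iio c)
        = ∫⁻ _ in Set.Iio c, γ B ∂(Piter m φ) := by rw [setLIntegral_const]
      _ = ∫⁻ ψ in Set.Iio c, P ψ B ∂(Piter m φ) := by
          apply setLIntegral_congr_fun hIio
          intro ψ hψ; show γ B = P ψ B
          rw [hP ψ B hB, if_pos (Set.mem_Iio.mp hψ)]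
      _ ≤ ∫⁻ ψ, P ψ B ∂(Piter m φ) := setLIntegral_le_lintegral _ _
  exact lt_of_lt_of_le (ENNReal.mul_pos hγB.ne' hmpos.ne') h1
end
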